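/- arXiv:2503.07624 — 3 statements merged into one kernel-verified Lean document; each statement's English description precedes it below -/
import Mathlib

section
/- For every natural number j, the polynomial φ_j(t) = L_j(t) − L_{j+2}(t) vanishes at t = −1 and t = 1, so (t + 1) divides φ_j in ℝ[t]; let q_j denote the polynomial quotient φ_j(t)/(t + 1). Then for all natural numbers i ≤ j, the integral ∫_{−1}^{1} q_i(t) φ_j(t) dt equals: 2(2i + 3)/((i + 1)(i + 2)) if j = i; −2/(i + 2) if j = i + 1; and 0 if j ≥ i + 2. -/
open Polynomial MeasureTheory

noncomputable section

/-- The Legendre polynomial `L_n`, given by the Rodrigues formula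
`L_n(t) = (1/(2^n n!)) (d/dt)^n [(t² − 1)^n]`. -/
noncomputable def legendreP (n : ℕ) : Polynomial ℝ :=
  ((2 ^ n * n.factorial : ℝ))⁻¹ • (Polynomial.derivative^[n] ((X ^ 2 - 1) ^ n))

/-- `φ_j(t) = L_j(t) − L_{j+2}(t)`. -/
noncomputable def phiP (j : ℕ) : Polynomial ℝ := legendreP j - legendreP (j + 2)

/-- `q_j = φ_j / (t + 1)`, the polynomial quotient of `φ_j` by the monic polynomial `t + 1`. -/
noncomputable def qP (j : ℕ) : Polynomial ℝ := phiP j /ₘ (X + C 1)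

lemma iter_deriv_pow_mul_eval (a : ℝ) :
    ∀ (n : ℕ) (p : Polynomial ℝ),
      (derivative^[n] ((X - C a) ^ n * p)).eval a = n.factorial * p.eval a
  | 0, p => by simp
  | (n+1), p => by
    have h : derivative ((X - C a) ^ (n+1) * p)
        = (X - C a) ^ n * (C ((n:ℝ)+1) * p + (X - C a) * derivative p) := by
      rw [derivative_mul, derivative_pow]
      simp only [derivative_sub, derivative_X, derivative_C, sub_zero, mul_one]
      push_cast
      ring
    rw [Function.iterate_succ_apply, h, iter_deriv_pow_mul_eval a n _]
    simp [Nat.factorial_succ]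
    push_cast
    ring

lemma two_pow_fact_ne (n : ℕ) : ((2:ℝ) ^ n * n.factorial) ≠ 0 := by
  positivity

lemma legendre_eval_one (n : ℕ) : (legendreP n).eval 1 = 1 := by
  have h : ((X:Polynomial ℝ) ^ 2 - 1) ^ n = (X - C 1) ^ n * ((X + 1) ^ n) := by
    rw [← mul_pow]; simp only [map_one]; ring_nf
  rw [legendreP, eval_smul, h, iter_deriv_pow_mul_eval]
  simp only [smul_eq_mul, eval_pow, eval_add, eval_one, eval_X]
  rw [show (1:ℝ)+1 = 2 by norm_num]
  field_simp

lemma legendre_eval_neg_one (n : ℕ) : (legendreP n).eval (-1) = (-1) ^ n := by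
  have h : ((X:Polynomial ℝ) ^ 2 - 1) ^ n = (X - C (-1)) ^ n * ((X - 1) ^ n) := by
    rw [← mul_pow]; simp only [map_neg, map_one]; ring_nf
  rw [legendreP, eval_smul, h, iter_deriv_pow_mul_eval]
  simp only [smul_eq_mul, eval_pow, eval_sub, eval_one, eval_X]
  rw [show ((-1:ℝ) - 1) = (-1) * 2 by ring, mul_pow]
  have h2 : ((2:ℝ)^n * n.factorial) ≠ 0 := by positivity
  field_simp

lemma phi_eval_one (n : ℕ) : (phiP n).eval (1:ℝ) = 0 := by
  simp [phiP, legendre_eval_one]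

lemma phi_eval_neg_one (n : ℕ) : (phiP n).eval (-1:ℝ) = 0 := by
  simp [phiP, legendre_eval_neg_one, pow_add]

lemma Xp1_dvd_phi (n : ℕ) : (X + C 1 : Polynomial ℝ) ∣ phiP n := by
  have : (X + C 1 : Polynomial ℝ) = X - C (-1) := by simp
  rw [this, dvd_iff_isRoot]
  exact phi_eval_neg_one n

abbrev WW (n : ℕ) : Polynomial ℝ := ((X:Polynomial ℝ) ^ 2 - 1) ^ n

lemma W_factor (n : ℕ) : ∀ m, m ≤ n → ∃ s : Polynomial ℝ,
    derivative^[m] (WW n) = ((X:Polynomial ℝ)^2 - 1) ^ (n - m) * s := by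
  intro m
  induction m with
  | zero => intro _; exact ⟨1, by simp⟩
  | succ m ih =>
    intro hm
    obtain ⟨s, hs⟩ := ih (le_of_lt (Nat.lt_of_succ_le hm))
    refine ⟨(((n - (m+1) : ℕ) : Polynomial ℝ) + 1) * (2 * X) * s
      + ((X:Polynomial ℝ)^2 - 1) * derivative s, ?_⟩
    rw [Function.iterate_succ_apply', hs]
    have hnm : n - m = (n - (m+1)) + 1 := by omega
    rw [hnm, derivative_mul, derivative_pow]
    simp only [derivative_sub, derivative_one, derivative_pow, derivative_X, sub_zero, mul_one,
      C_eq_natCast]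
    push_cast
    ring

lemma W_deriv_boundary (n m : ℕ) (h : m < n) (x : ℝ) (hx : x^2 = 1) :
    (derivative^[m] (WW n)).eval x = 0 := by
  obtain ⟨s, hs⟩ := W_factor n m (le_of_lt h)
  rw [hs, eval_mul, eval_pow]
  have : n - m ≠ 0 := by omega
  simp [hx, zero_pow this]

lemma polyFTC (p : Polynomial ℝ) :
    ∫ t in (-1:ℝ)..1, (derivative p).eval t = p.eval 1 - p.eval (-1) := by
  refine intervalIntegral.integral_eq_sub_of_hasDerivAt (fun x _ => p.hasDerivAt x) ?_
  exact ((derivative p).continuous).intervalIntegrable _ _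

lemma polyIntegrable2 (p q : Polynomial ℝ) :
    IntervalIntegrable (fun t => p.eval t * q.eval t) volume (-1:ℝ) 1 :=
  ((p.continuous).mul (q.continuous)).intervalIntegrable _ _

/-- `∫_{-1}^1 (x²-1)^n dx`. -/
lemma intW (n : ℕ) : ∫ t in (-1:ℝ)..1, (WW n).eval t
    = (-1)^n * 2^(2*n+1) * (n.factorial)^2 / (2*n+1).factorial := by
  induction n with
  | zero => norm_num
  | succ n ih =>
    have hd : derivative ((X:Polynomial ℝ) * WW (n+1))
        = (2*(n:Polynomial ℝ)+3) * WW (n+1) + (2*(n:Polynomial ℝ)+2) * WW n := by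
      simp only [WW, derivative_mul, derivative_X, derivative_pow, derivative_sub,
        derivative_one, one_mul, sub_zero, mul_one, C_eq_natCast]
      push_cast
      ring
    have hftc := polyFTC ((X:Polynomial ℝ) * WW (n+1))
    rw [hd] at hftc
    have hb1 : (((X:Polynomial ℝ) * WW (n+1)).eval 1) = 0 := by simp
    have hb2 : (((X:Polynomial ℝ) * WW (n+1)).eval (-1)) = 0 := by simp
    rw [hb1, hb2, sub_zero] at hftc
    have hsplit : ∫ t in (-1:ℝ)..1,
          ((2*(n:Polynomial ℝ)+3) * WW (n+1) + (2*(n:Polynomial ℝ)+2) * WW n).eval t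
        = ((2:ℝ)*n+3) * (∫ t in (-1:ℝ)..1, (WW (n+1)).eval t)
          + ((2:ℝ)*n+2) * (∫ t in (-1:ℝ)..1, (WW n).eval t) := by
      simp only [eval_add, eval_mul, eval_natCast, eval_ofNat, Polynomial.eval_natCast]
      rw [intervalIntegral.integral_add]
      · rw [intervalIntegral.integral_const_mul, intervalIntegral.integral_const_mul]
      · exact (continuous_const.mul ((WW (n+1)).continuous)).intervalIntegrable _ _
      · exact (continuous_const.mul ((WW n).continuous)).intervalIntegrable _ _
    rw [hsplit] at hftc
    have h3 : ((2:ℝ)*n+3) ≠ 0 := by positivity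
    have heq : (∫ t in (-1:ℝ)..1, (WW (n+1)).eval t)
        = -((2:ℝ)*n+2) / ((2:ℝ)*n+3) * (∫ t in (-1:ℝ)..1, (WW n).eval t) := by
      rw [div_mul_eq_mul_div, eq_div_iff h3]
      linear_combination hftc
    rw [heq, ih]
    have hf1 : ((2*(n+1)+1).factorial : ℝ) = (2*n+3) * ((2*n+2) * (2*n+1).factorial) := by
      rw [show 2*(n+1)+1 = (2*n+2)+1 by ring, Nat.factorial_succ,
        show (2*n+2) = (2*n+1)+1 by ring, Nat.factorial_succ]
      push_cast
      ring
    have hf2 : ((n+1).factorial : ℝ) = (n+1) * n.factorial := by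
      rw [Nat.factorial_succ]; push_cast; ring
    rw [hf1, hf2]
    have hne : ((2*n+1).factorial : ℝ) ≠ 0 := by positivity
    field_simp
    push_cast
    ring

/-- `∫_{-1}^1 x (x²-1)^n dx = 0`. -/
lemma intXW (n : ℕ) : ∫ t in (-1:ℝ)..1, ((X:Polynomial ℝ) * WW n).eval t = 0 := by
  have hd : derivative (WW (n+1)) = (2*(n:Polynomial ℝ)+2) * ((X:Polynomial ℝ) * WW n) := by
    simp only [WW, derivative_pow, derivative_sub, derivative_one, derivative_X, sub_zero,
      mul_one, C_eq_natCast]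
    push_cast
    ring
  have hftc := polyFTC (WW (n+1))
  rw [hd] at hftc
  have hb1 : ((WW (n+1)).eval (1:ℝ)) = 0 := by simp
  have hb2 : ((WW (n+1)).eval (-1:ℝ)) = 0 := by simp
  rw [hb1, hb2, sub_zero] at hftc
  have hsplit : ∫ t in (-1:ℝ)..1, ((2*(n:Polynomial ℝ)+2) * ((X:Polynomial ℝ) * WW n)).eval t
      = ((2:ℝ)*n+2) * (∫ t in (-1:ℝ)..1, ((X:Polynomial ℝ) * WW n).eval t) := by
    simp only [eval_mul, eval_add, eval_natCast, eval_ofNat, eval_X]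
    rw [← intervalIntegral.integral_const_mul]
  rw [hsplit] at hftc
  have h2 : ((2:ℝ)*n+2) ≠ 0 := by positivity
  exact (mul_eq_zero.mp hftc).resolve_left h2

lemma J_flip (n : ℕ) (p : Polynomial ℝ) {k : ℕ} (hk : k < n) :
    ∫ t in (-1:ℝ)..1, (derivative^[k] p).eval t * (derivative^[n-k] (WW n)).eval t
    = - ∫ t in (-1:ℝ)..1, (derivative^[k+1] p).eval t * (derivative^[n-(k+1)] (WW n)).eval t := by
  set u := derivative^[k] p with hu
  set v := derivative^[n-(k+1)] (WW n) with hv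
  have hdv : derivative v = derivative^[n-k] (WW n) := by
    have h := Function.iterate_succ_apply' derivative (n-(k+1)) (WW n)
    rw [hv, ← h]
    congr 1
    omega
  have hdu : derivative u = derivative^[k+1] p := by
    have h := Function.iterate_succ_apply' derivative k p
    rw [hu, ← h]
  have hftc := polyFTC (u * v)
  have hb1 : (u * v).eval (1:ℝ) = 0 := by
    rw [eval_mul, hv, W_deriv_boundary n _ (by omega) 1 (by norm_num), mul_zero]
  have hb2 : (u * v).eval (-1:ℝ) = 0 := by
    rw [eval_mul, hv, W_deriv_boundary n _ (by omega) (-1) (by norm_num), mul_zero]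
  rw [hb1, hb2, sub_zero, derivative_mul, hdu, hdv] at hftc
  have hsplit : ∫ t in (-1:ℝ)..1, (derivative^[k+1] p * v + u * derivative^[n-k] (WW n)).eval t
      = (∫ t in (-1:ℝ)..1, (derivative^[k+1] p).eval t * v.eval t)
        + ∫ t in (-1:ℝ)..1, u.eval t * (derivative^[n-k] (WW n)).eval t := by
    simp only [eval_add, eval_mul]
    exact intervalIntegral.integral_add (polyIntegrable2 _ _) (polyIntegrable2 _ _)
  rw [hsplit] at hftc
  linarith [hftc]

lemma J_all (n : ℕ) (p : Polynomial ℝ) : ∀ k, k ≤ n →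
    ∫ t in (-1:ℝ)..1, p.eval t * (derivative^[n] (WW n)).eval t
    = (-1)^k * ∫ t in (-1:ℝ)..1, (derivative^[k] p).eval t * (derivative^[n-k] (WW n)).eval t := by
  intro k
  induction k with
  | zero => intro _; simp
  | succ k ih =>
    intro hk
    rw [ih (by omega), J_flip n p (by omega : k < n)]
    ring

lemma iterate_deriv_of_natDegree_le (n : ℕ) (p : Polynomial ℝ) (hp : p.natDegree ≤ n+1) :
    derivative^[n] p
      = C ((n.factorial : ℝ) * p.coeff n) + C (((n+1).factorial : ℝ) * p.coeff (n+1)) * X := by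
  have hdeg : (derivative^[n] p).natDegree ≤ 1 :=
    le_trans (natDegree_iterate_derivative p n) (by omega)
  have h := eq_X_add_C_of_natDegree_le_one hdeg
  have hc0 : (derivative^[n] p).coeff 0 = (n.factorial : ℝ) * p.coeff n := by
    rw [coeff_iterate_derivative]
    simp [Nat.descFactorial_self, nsmul_eq_mul]
  have hc1 : (derivative^[n] p).coeff 1 = ((n+1).factorial : ℝ) * p.coeff (n+1) := by
    rw [coeff_iterate_derivative]
    have : (1 + n).descFactorial n = (n+1).factorial := by
      rw [Nat.descFactorial_eq_factorial_mul_choose]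
      rw [Nat.add_comm 1 n, Nat.choose_succ_self_right, Nat.factorial_succ]
      ring
    rw [nsmul_eq_mul, this]
    norm_num
    left
    congr 1
    omega
  rw [h, hc0, hc1]
  ring

lemma KK_def : True := trivial

lemma int_mul_legendre (n : ℕ) (p : Polynomial ℝ) (hp : p.natDegree ≤ n+1) :
    ∫ t in (-1:ℝ)..1, p.eval t * (legendreP n).eval t
      = p.coeff n * (2^(n+1) * ((n.factorial:ℝ))^2 / ((2*n+1).factorial)) := by
  have hL : ∫ t in (-1:ℝ)..1, p.eval t * (legendreP n).eval t
      = ((2:ℝ) ^ n * n.factorial)⁻¹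
        * ∫ t in (-1:ℝ)..1, p.eval t * (derivative^[n] (WW n)).eval t := by
    simp only [legendreP, eval_smul, smul_eq_mul]
    rw [← intervalIntegral.integral_const_mul]
    congr 1
    ext t
    ring
  have h1 := J_all n p n le_rfl
  rw [Nat.sub_self, Function.iterate_zero_apply] at h1
  have h2 : ∫ t in (-1:ℝ)..1, (derivative^[n] p).eval t * (WW n).eval t
      = (n.factorial : ℝ) * p.coeff n * ((-1)^n * 2^(2*n+1) * ((n.factorial:ℝ))^2 / ((2*n+1).factorial)) := by
    rw [iterate_deriv_of_natDegree_le n p hp]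
    have : ∀ t : ℝ, (C ((n.factorial : ℝ) * p.coeff n)
          + C (((n+1).factorial : ℝ) * p.coeff (n+1)) * X).eval t * (WW n).eval t
        = ((n.factorial : ℝ) * p.coeff n) * (WW n).eval t
          + (((n+1).factorial : ℝ) * p.coeff (n+1)) * (((X:Polynomial ℝ) * WW n).eval t) := by
      intro t; simp [eval_mul]; ring
    rw [intervalIntegral.integral_congr (fun t _ => this t)]
    rw [intervalIntegral.integral_add, intervalIntegral.integral_const_mul,
      intervalIntegral.integral_const_mul, intW, intXW, mul_zero, add_zero]
    · exact (continuous_const.mul ((WW n).continuous)).intervalIntegrable _ _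
    · exact (continuous_const.mul ((X * WW n : Polynomial ℝ).continuous)).intervalIntegrable _ _
  rw [hL, h1, h2]
  have hne1 : ((n.factorial:ℝ)) ≠ 0 := by positivity
  have hne2 : ((2*n+1).factorial : ℝ) ≠ 0 := by positivity
  have hne3 : (2:ℝ)^n ≠ 0 := by positivity
  have h4 : ((-1:ℝ))^n * (-1)^n = 1 := by
    rw [← pow_add]
    exact Even.neg_one_pow ⟨n, by ring⟩
  rw [show ((-1:ℝ))^n * ((n.factorial:ℝ) * p.coeff n
        * ((-1)^n * 2^(2*n+1) * ((n.factorial:ℝ))^2 / ((2*n+1).factorial)))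
      = ((-1:ℝ)^n*(-1)^n) * ((n.factorial:ℝ) * p.coeff n
        * (2^(2*n+1) * ((n.factorial:ℝ))^2 / ((2*n+1).factorial))) by ring, h4, one_mul]
  rw [show 2*n+1 = n + (n+1) by ring, pow_add]
  field_simp

lemma coeff_W_odd (n : ℕ) : ∀ k, (WW n).coeff (2*k+1) = 0 := by
  induction n with
  | zero =>
    intro k
    have h1 : ¬(2*k+1 = 0) := by omega
    have h2 : ¬(0 = 2*k+1) := by omega
    simp [WW, coeff_one, h1, h2]
  | succ n ih =>
    intro k
    have h : WW (n+1) = WW n * X^2 - WW n := by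
      simp only [WW]; ring
    rw [h, coeff_sub, coeff_mul_X_pow', ih k]
    rcases Nat.eq_zero_or_pos k with hk | hk
    · subst hk; norm_num
    · have h2 : 2 ≤ 2*k+1 := by omega
      rw [if_pos h2, show 2*k+1-2 = 2*(k-1)+1 by omega, ih (k-1)]
      simp

lemma W_monic (n : ℕ) : (WW n).Monic := by
  have : ((X:Polynomial ℝ)^2 - 1) = X^2 - C 1 := by simp
  rw [WW, this]
  exact (monic_X_pow_sub_C (1:ℝ) two_ne_zero).pow n

lemma W_natDegree (n : ℕ) : (WW n).natDegree = 2*n := by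
  have : ((X:Polynomial ℝ)^2 - 1) = X^2 - C 1 := by simp
  rw [WW, this, Monic.natDegree_pow (monic_X_pow_sub_C (1:ℝ) two_ne_zero), natDegree_X_pow_sub_C]
  ring

lemma W_coeff_top (n : ℕ) : (WW n).coeff (2*n) = 1 := by
  have := (W_monic n).leadingCoeff
  rwa [leadingCoeff, W_natDegree] at this

/-- leading coefficient value of `legendreP n`. -/
def cLead (n : ℕ) : ℝ := ((2*n).factorial : ℝ) / (2^n * ((n.factorial : ℝ))^2)

lemma descFact_cast (n : ℕ) :
    (((2*n).descFactorial n : ℕ) : ℝ) * (n.factorial : ℝ) = ((2*n).factorial : ℝ) := by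
  have h := Nat.factorial_mul_descFactorial (show n ≤ 2*n by omega)
  rw [show 2*n - n = n by omega] at h
  have h2 : (2*n).descFactorial n * n.factorial = (2*n).factorial := by rw [← h]; ring
  exact_mod_cast h2

lemma legendre_coeff_top (n : ℕ) : (legendreP n).coeff n = cLead n := by
  rw [legendreP, coeff_smul, coeff_iterate_derivative, show n + n = 2*n by ring, W_coeff_top]
  simp only [smul_eq_mul, nsmul_eq_mul, mul_one]
  have hd := descFact_cast n
  have h1 : ((n.factorial:ℝ)) ≠ 0 := by positivity
  have h2 : (2:ℝ)^n ≠ 0 := by positivity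
  rw [cLead]
  field_simp
  linear_combination hd

lemma cLead_pos (n : ℕ) : 0 < cLead n := by
  rw [cLead]; positivity

lemma legendre_natDegree (n : ℕ) : (legendreP n).natDegree = n := by
  have hle : (legendreP n).natDegree ≤ n := by
    refine le_trans (natDegree_smul_le _ _) ?_
    refine le_trans (natDegree_iterate_derivative _ _) ?_
    rw [show ((X:Polynomial ℝ)^2-1)^n = WW n from rfl, W_natDegree]
    omega
  have hne : (legendreP n).coeff n ≠ 0 := by
    rw [legendre_coeff_top]
    exact ne_of_gt (cLead_pos n)
  exact le_antisymm hle (le_natDegree_of_ne_zero hne)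

lemma legendre_coeff_sub_one (n : ℕ) : (legendreP (n+2)).coeff (n+1) = 0 := by
  rw [legendreP, coeff_smul, coeff_iterate_derivative,
    show (n+1) + (n+2) = 2*(n+1)+1 by ring, coeff_W_odd (n+2) (n+1)]
  simp

lemma legendre_coeff_gt (n k : ℕ) (h : n < k) : (legendreP n).coeff k = 0 :=
  coeff_eq_zero_of_natDegree_lt (by rw [legendre_natDegree]; exact h)

lemma phi_eq (n : ℕ) : phiP n = (X + C 1) * qP n := by
  have hm : (X + C (1:ℝ)).Monic := monic_X_add_C 1
  have h := modByMonic_add_div (phiP n) (X + C 1)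
  rw [(modByMonic_eq_zero_iff_dvd hm).mpr (Xp1_dvd_phi n), zero_add] at h
  exact h.symm

lemma phi_natDegree (n : ℕ) : (phiP n).natDegree = n + 2 := by
  rw [phiP, natDegree_sub_eq_right_of_natDegree_lt, legendre_natDegree]
  rw [legendre_natDegree, legendre_natDegree]
  omega

lemma phi_coeff_top (n : ℕ) : (phiP n).coeff (n+2) = -cLead (n+2) := by
  rw [phiP, coeff_sub, legendre_coeff_gt n (n+2) (by omega), legendre_coeff_top]
  ring

lemma phi_coeff_next (n : ℕ) : (phiP n).coeff (n+1) = 0 := by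
  rw [phiP, coeff_sub, legendre_coeff_gt n (n+1) (by omega), legendre_coeff_sub_one]
  ring

lemma q_natDegree (n : ℕ) : (qP n).natDegree = n + 1 := by
  rw [qP, natDegree_divByMonic _ (monic_X_add_C 1), phi_natDegree, natDegree_X_add_C]
  omega

lemma q_coeff_top (n : ℕ) : (qP n).coeff (n+1) = -cLead (n+2) := by
  have h2 : (phiP n).coeff (n+2) = (qP n).coeff (n+1) + (qP n).coeff (n+2) := by
    rw [phi_eq n, add_mul, coeff_add, show n+2 = (n+1)+1 from rfl, coeff_X_mul,
      coeff_C_mul, one_mul]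
  have h3 : (qP n).coeff (n+2) = 0 :=
    coeff_eq_zero_of_natDegree_lt (by rw [q_natDegree]; omega)
  rw [phi_coeff_top, h3, add_zero] at h2
  exact h2.symm

lemma q_coeff_second (n : ℕ) : (qP n).coeff n = cLead (n+2) := by
  have h2 : (phiP n).coeff (n+1) = (qP n).coeff n + (qP n).coeff (n+1) := by
    rw [phi_eq n, add_mul, coeff_add, coeff_X_mul, coeff_C_mul, one_mul]
  rw [phi_coeff_next, q_coeff_top] at h2
  linarith

lemma int_q_phi (i j : ℕ) (hij : i ≤ j) :
    ∫ t in (-1:ℝ)..1, (qP i).eval t * (phiP j).eval t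
      = (qP i).coeff j * (2^(j+1) * ((j.factorial:ℝ))^2 / ((2*j+1).factorial)) := by
  have hfun : (fun t : ℝ => (qP i).eval t * (phiP j).eval t)
      = fun t : ℝ => (qP i).eval t * (legendreP j).eval t
        - (qP i).eval t * (legendreP (j+2)).eval t := by
    funext t
    simp only [phiP, eval_sub]
    ring
  rw [hfun, intervalIntegral.integral_sub (polyIntegrable2 _ _) (polyIntegrable2 _ _)]
  rw [int_mul_legendre j _ (by rw [q_natDegree]; omega),
      int_mul_legendre (j+2) _ (by rw [q_natDegree]; omega)]
  have h0 : (qP i).coeff (j+2) = 0 :=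
    coeff_eq_zero_of_natDegree_lt (by rw [q_natDegree]; omega)
  rw [h0]
  ring

lemma num1 (i : ℕ) : cLead (i+2) * (2^(i+1) * ((i.factorial:ℝ))^2 / ((2*i+1).factorial))
    = 2 * (2 * (i:ℝ) + 3) / (((i:ℝ) + 1) * ((i:ℝ) + 2)) := by
  rw [cLead]
  have e1 : ((2*(i+2)).factorial : ℝ)
      = (2*(i:ℝ)+4)*((2*(i:ℝ)+3)*((2*(i:ℝ)+2)*((2*i+1).factorial))) := by
    rw [show 2*(i+2) = (2*i+3)+1 by ring, Nat.factorial_succ,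
        show 2*i+3 = (2*i+2)+1 by ring, Nat.factorial_succ,
        show 2*i+2 = (2*i+1)+1 by ring, Nat.factorial_succ]
    push_cast; ring
  have e2 : (((i+2)).factorial : ℝ) = ((i:ℝ)+2)*(((i:ℝ)+1)*(i.factorial)) := by
    rw [Nat.factorial_succ, Nat.factorial_succ]; push_cast; ring
  rw [e1, e2]
  have h1 : ((i.factorial:ℝ)) ≠ 0 := by positivity
  have h2 : ((2*i+1).factorial : ℝ) ≠ 0 := by positivity
  have h3 : ((i:ℝ)+1) ≠ 0 := by positivity
  have h4 : ((i:ℝ)+2) ≠ 0 := by positivity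
  have h5 : (2:ℝ)^i ≠ 0 := by positivity
  rw [show i+2 = (i+1)+1 from rfl, pow_succ, pow_succ, pow_succ]
  field_simp
  ring

lemma num2 (i : ℕ) :
    -cLead (i+2) * (2^((i+1)+1) * (((i+1).factorial:ℝ))^2 / ((2*(i+1)+1).factorial))
      = -2 / ((i:ℝ)+2) := by
  rw [cLead]
  have e1 : ((2*(i+2)).factorial : ℝ) = (2*(i:ℝ)+4)*((2*(i+1)+1).factorial) := by
    rw [show 2*(i+2) = (2*(i+1)+1)+1 by ring, Nat.factorial_succ]
    push_cast; ring
  have e2 : (((i+2)).factorial : ℝ) = ((i:ℝ)+2)*((i+1).factorial) := by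
    rw [show i+2 = (i+1)+1 from rfl, Nat.factorial_succ]; push_cast; ring
  rw [e1, e2]
  have h1 : (((i+1).factorial:ℝ)) ≠ 0 := by positivity
  have h2 : ((2*(i+1)+1).factorial : ℝ) ≠ 0 := by positivity
  have h4 : ((i:ℝ)+2) ≠ 0 := by positivity
  have h5 : (2:ℝ)^i ≠ 0 := by positivity
  rw [show i+2 = (i+1)+1 from rfl, pow_succ, pow_succ, pow_succ]
  field_simp
  ring

/-- Every `φ_j` vanishes at `t = −1` and `t = 1`, so `(t+1) ∣ φ_j`; and for `i ≤ j`,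
`∫_{−1}^{1} q_i(t) φ_j(t) dt` equals `2(2i+3)/((i+1)(i+2))` if `j = i`, `−2/(i+2)` if
`j = i+1`, and `0` if `j ≥ i+2`. -/
theorem integral_q_phi (i j : ℕ) (hij : i ≤ j) :
    (∀ n : ℕ, (phiP n).eval (-1 : ℝ) = 0) ∧
    (∀ n : ℕ, (phiP n).eval (1 : ℝ) = 0) ∧
    (∀ n : ℕ, (X + C 1 : Polynomial ℝ) ∣ phiP n) ∧
    (j = i →
      ∫ t in (-1:ℝ)..1, (qP i).eval t * (phiP j).eval t
        = 2 * (2 * (i : ℝ) + 3) / (((i : ℝ) + 1) * ((i : ℝ) + 2))) ∧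
    (j = i + 1 →
      ∫ t in (-1:ℝ)..1, (qP i).eval t * (phiP j).eval t = -2 / ((i : ℝ) + 2)) ∧
    (i + 2 ≤ j →
      ∫ t in (-1:ℝ)..1, (qP i).eval t * (phiP j).eval t = 0) := by
  refine ⟨phi_eval_neg_one, phi_eval_one, Xp1_dvd_phi, ?_, ?_, ?_⟩
  · intro h
    rw [h, int_q_phi i i le_rfl, q_coeff_second, num1]
  · intro h
    rw [h, int_q_phi i (i+1) (by omega), q_coeff_top, num2]
  · intro hj
    rw [int_q_phi i j hij]
    have h0 : (qP i).coeff j = 0 :=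
      coeff_eq_zero_of_natDegree_lt (by rw [q_natDegree]; omega)
    rw [h0, zero_mul]
end
end

section
/- For all natural numbers i ≤ j, the integral ∫_{−1}^{1} (t + 1) φ_i(t) φ_j(t) dt equals: 2/(2i + 1) + 2/(2i + 5) if j = i; 2/((2i + 1)(2i + 5)) + 2(i + 3)/((2i + 5)(2i + 7)) if j = i + 1; −2/(2i + 5) if j = i + 2; −2(i + 3)/((2i + 5)(2i + 7)) if j = i + 3; and 0 if j ≥ i + 4. -/
open Polynomial MeasureTheory

noncomputable section

open intervalIntegral

namespace LegAux

/-- abbreviation for the Rodrigues core -/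
noncomputable def F (n : ℕ) : Polynomial ℝ := (X ^ 2 - 1) ^ n

lemma contInt (p : Polynomial ℝ) : IntervalIntegrable (fun t => p.eval t) volume (-1) 1 :=
  p.continuous.intervalIntegrable _ _

lemma contInt2 (p q : Polynomial ℝ) :
    IntervalIntegrable (fun t => p.eval t * q.eval t) volume (-1) 1 :=
  (p.continuous.mul q.continuous).intervalIntegrable _ _

lemma dvd_iter (n : ℕ) : ∀ j, j ≤ n →
    ((X ^ 2 - 1 : Polynomial ℝ)) ^ (n - j) ∣ derivative^[j] (F n) := by
  intro j
  induction j with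
  | zero => intro _; simp [F]
  | succ j ih =>
    intro hj
    obtain ⟨g, hg⟩ := ih (by omega)
    rw [Function.iterate_succ_apply', hg]
    refine ⟨C ((n - j : ℕ) : ℝ) * derivative (X ^ 2 - 1) * g + (X ^ 2 - 1) * derivative g, ?_⟩
    rw [derivative_mul, derivative_pow]
    have h2 : (X ^ 2 - 1 : Polynomial ℝ) ^ (n - j) = (X ^ 2 - 1) ^ (n - (j + 1)) * (X ^ 2 - 1) := by
      rw [← pow_succ]; congr 1; omega
    have h3 : n - j - 1 = n - (j + 1) := by omega
    rw [h3, h2]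
    ring

lemma eval_iter_boundary {n j : ℕ} (hj : j < n) {x : ℝ} (hx : x ^ 2 = 1) :
    (derivative^[j] (F n)).eval x = 0 := by
  obtain ⟨g, hg⟩ := dvd_iter n j (le_of_lt hj)
  rw [hg, eval_mul, eval_pow, eval_sub, eval_pow, eval_one, eval_X, hx, sub_self,
    zero_pow (by omega), zero_mul]

lemma ibp (p q : Polynomial ℝ) (hq1 : q.eval 1 = 0) (hqm : q.eval (-1) = 0) :
    ∫ t in (-1:ℝ)..1, p.eval t * (derivative q).eval t
      = - ∫ t in (-1:ℝ)..1, (derivative p).eval t * q.eval t := by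
  rw [integral_mul_deriv_eq_deriv_mul (u' := fun t => (derivative p).eval t)
    (fun x _ => p.hasDerivAt x) (fun x _ => q.hasDerivAt x) (contInt _) (contInt _),
    hq1, hqm]
  ring

lemma rod_shift (p : Polynomial ℝ) (n : ℕ) :
    ∫ t in (-1:ℝ)..1, p.eval t * (derivative^[n] (F n)).eval t
      = (-1 : ℝ) ^ n * ∫ t in (-1:ℝ)..1, (derivative^[n] p).eval t * (F n).eval t := by
  suffices h : ∀ k, k ≤ n → ∫ t in (-1:ℝ)..1, p.eval t * (derivative^[n] (F n)).eval t
      = (-1 : ℝ) ^ k * ∫ t in (-1:ℝ)..1,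
          (derivative^[k] p).eval t * (derivative^[n - k] (F n)).eval t by
    simpa using h n le_rfl
  intro k
  induction k with
  | zero => intro _; simp
  | succ k ih =>
    intro hk
    rw [ih (by omega)]
    have hnk : derivative^[n - k] (F n) = derivative (derivative^[n - (k + 1)] (F n)) := by
      have h1 : n - k = (n - (k + 1)) + 1 := by omega
      rw [h1, Function.iterate_succ_apply']
    rw [hnk, ibp _ _ (eval_iter_boundary (by omega) (by norm_num))
        (eval_iter_boundary (by omega) (by norm_num))]
    have h2 : derivative (derivative^[k] p) = derivative^[k + 1] p :=
      (Function.iterate_succ_apply' _ _ _).symm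
    simp only [h2]
    ring

lemma ftc (p : Polynomial ℝ) :
    ∫ t in (-1:ℝ)..1, (derivative p).eval t = p.eval 1 - p.eval (-1) := by
  have := intervalIntegral.integral_eq_sub_of_hasDerivAt (f := fun t => p.eval t)
    (f' := fun t => (derivative p).eval t) (a := -1) (b := 1)
    (fun x _ => p.hasDerivAt x) (contInt _)
  simpa using this

noncomputable def Ival (n : ℕ) : ℝ := ∫ t in (-1:ℝ)..1, ((X ^ 2 - 1 : Polynomial ℝ) ^ n).eval t

lemma Ival_succ (n : ℕ) :
    (2 * (n : ℝ) + 3) * Ival (n + 1) = -(2 * (n : ℝ) + 2) * Ival n := by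
  have key : derivative (X * (X ^ 2 - 1 : Polynomial ℝ) ^ (n + 1))
      = C (2 * (n : ℝ) + 3) * (X ^ 2 - 1) ^ (n + 1) + C (2 * (n : ℝ) + 2) * (X ^ 2 - 1) ^ n := by
    rw [derivative_mul, derivative_X, derivative_pow]
    have hd : derivative ((X : Polynomial ℝ) ^ 2 - 1) = C 2 * X := by
      simp [derivative_X_pow]; rw [← C_1, ← C_add]; norm_num
    have hC3 : (C (2 * (n : ℝ) + 3) : Polynomial ℝ) = C 2 * C (n : ℝ) + C 3 := by
      rw [C_add, C_mul]
    have hC2 : (C (2 * (n : ℝ) + 2) : Polynomial ℝ) = C 2 * C (n : ℝ) + C 2 := by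
      rw [C_add, C_mul]
    have hCn : (C ((n + 1 : ℕ) : ℝ) : Polynomial ℝ) = C (n : ℝ) + C 1 := by
      push_cast; rw [C_add]
    have hns : n + 1 - 1 = n := rfl
    rw [hd, hC3, hC2, hCn, hns, pow_succ]
    have hC1 : (C (1:ℝ) : Polynomial ℝ) = 1 := C_1
    have hC32 : (C (3:ℝ) : Polynomial ℝ) = C 2 + C 1 := by rw [← C_add]; norm_num
    rw [hC32, hC1]
    ring
  have h0 : ∫ t in (-1:ℝ)..1, (derivative (X * (X ^ 2 - 1 : Polynomial ℝ) ^ (n + 1))).eval t = 0 := by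
    rw [ftc]
    simp
  rw [key] at h0
  have hsplit : ∀ t : ℝ, (C (2 * (n : ℝ) + 3) * (X ^ 2 - 1) ^ (n + 1)
      + C (2 * (n : ℝ) + 2) * (X ^ 2 - 1) ^ n).eval t
      = (2 * (n : ℝ) + 3) * ((X ^ 2 - 1 : Polynomial ℝ) ^ (n + 1)).eval t
        + (2 * (n : ℝ) + 2) * ((X ^ 2 - 1 : Polynomial ℝ) ^ n).eval t := by
    intro t
    simp
  simp only [hsplit] at h0
  rw [intervalIntegral.integral_add (((contInt _).const_mul _)) (((contInt _).const_mul _)),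
    intervalIntegral.integral_const_mul, intervalIntegral.integral_const_mul] at h0
  unfold Ival
  linarith

lemma Ival_eq (n : ℕ) :
    Ival n = (-1 : ℝ) ^ n * 2 ^ (2 * n + 1) * (n.factorial : ℝ) ^ 2 / ((2 * n + 1).factorial) := by
  induction n with
  | zero => simp [Ival]; norm_num
  | succ n ih =>
    have h := Ival_succ n
    rw [ih] at h
    have h3 : (2 * (n : ℝ) + 3) ≠ 0 := by positivity
    have hIval : Ival (n + 1) = -(2 * (n : ℝ) + 2)
        * ((-1 : ℝ) ^ n * 2 ^ (2 * n + 1) * (n.factorial : ℝ) ^ 2 / ((2 * n + 1).factorial))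
        / (2 * (n : ℝ) + 3) := by
      field_simp at h ⊢
      linarith
    rw [hIval]
    have hf1 : ((2 * (n + 1) + 1).factorial : ℝ)
        = (2 * (n : ℝ) + 3) * ((2 * (n : ℝ) + 2) * ((2 * n + 1).factorial : ℝ)) := by
      have : 2 * (n + 1) + 1 = (2 * n + 1) + 1 + 1 := by omega
      rw [this, Nat.factorial_succ, Nat.factorial_succ]
      push_cast
      ring
    have hf2 : ((n + 1).factorial : ℝ) = ((n : ℝ) + 1) * (n.factorial : ℝ) := by
      rw [Nat.factorial_succ]; push_cast; ring
    rw [hf1, hf2]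
    have hfn : (n.factorial : ℝ) ≠ 0 := by positivity
    have hfn2 : ((2 * n + 1).factorial : ℝ) ≠ 0 := by positivity
    have h22 : 2 * (n + 1) + 1 = 2 * n + 3 := by omega
    field_simp
    ring

lemma iter_deriv_zero (p : Polynomial ℝ) (n : ℕ) (h : ∀ k, n ≤ k → p.coeff k = 0) :
    derivative^[n] p = 0 := by
  ext m
  rw [coeff_iterate_derivative, h (m + n) (by omega)]
  simp

lemma legendre_pull (p : Polynomial ℝ) (n : ℕ) :
    ∫ t in (-1:ℝ)..1, p.eval t * (legendreP n).eval t
      = ((2 ^ n * n.factorial : ℝ))⁻¹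
        * ∫ t in (-1:ℝ)..1, p.eval t * (derivative^[n] (F n)).eval t := by
  have hpt : ∀ t : ℝ, p.eval t * (legendreP n).eval t
      = ((2 ^ n * n.factorial : ℝ))⁻¹ * (p.eval t * (derivative^[n] (F n)).eval t) := by
    intro t
    simp [legendreP, F, smul_eq_mul]
    ring
  simp only [hpt]
  rw [intervalIntegral.integral_const_mul]

lemma orth (p : Polynomial ℝ) (n : ℕ) (h : ∀ k, n ≤ k → p.coeff k = 0) :
    ∫ t in (-1:ℝ)..1, p.eval t * (legendreP n).eval t = 0 := by
  rw [legendre_pull, rod_shift, iter_deriv_zero p n h]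
  simp

/-- `∫ xⁿ Lₙ`. -/
noncomputable def An (n : ℕ) : ℝ :=
  2 ^ (n + 1) * (n.factorial : ℝ) ^ 2 / ((2 * n + 1).factorial)

lemma intXnLn (n : ℕ) :
    ∫ t in (-1:ℝ)..1, ((X : Polynomial ℝ) ^ n).eval t * (legendreP n).eval t = An n := by
  rw [legendre_pull, rod_shift]
  have hD : derivative^[n] ((X : Polynomial ℝ) ^ n) = C (n.factorial : ℝ) := by
    rw [iterate_derivative_X_pow_eq_C_mul, Nat.descFactorial_self, Nat.sub_self, pow_zero, mul_one]
  rw [hD]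
  have hpt : ∀ t : ℝ, (C (n.factorial : ℝ)).eval t * (F n).eval t
      = (n.factorial : ℝ) * (F n).eval t := by
    intro t; simp
  simp only [hpt]
  rw [intervalIntegral.integral_const_mul]
  have : (∫ t in (-1:ℝ)..1, (F n).eval t) = Ival n := rfl
  rw [this, Ival_eq, An]
  have hfn : (n.factorial : ℝ) ≠ 0 := by positivity
  have hfn2 : ((2 * n + 1).factorial : ℝ) ≠ 0 := by positivity
  have h2 : (2:ℝ) ^ (2 * n + 1) = 2 ^ n * 2 ^ (n + 1) := by
    rw [← pow_add]; congr 1; omega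
  rcases Nat.even_or_odd n with he | ho
  · rw [he.neg_one_pow]
    field_simp
    rw [h2]
  · rw [ho.neg_one_pow]
    field_simp
    rw [h2]

lemma val (p : Polynomial ℝ) (n : ℕ) (h : ∀ k, n < k → p.coeff k = 0) :
    ∫ t in (-1:ℝ)..1, p.eval t * (legendreP n).eval t = p.coeff n * An n := by
  set q : Polynomial ℝ := p - C (p.coeff n) * X ^ n with hq
  have hpt : ∀ t : ℝ, p.eval t * (legendreP n).eval t
      = q.eval t * (legendreP n).eval t
        + p.coeff n * (((X : Polynomial ℝ) ^ n).eval t * (legendreP n).eval t) := by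
    intro t
    simp [hq]
    ring
  rw [intervalIntegral.integral_congr (g := fun t => q.eval t * (legendreP n).eval t
        + p.coeff n * (((X : Polynomial ℝ) ^ n).eval t * (legendreP n).eval t))
      (fun t _ => hpt t)]
  have hint2 : IntervalIntegrable
      (fun t => p.coeff n * (((X : Polynomial ℝ) ^ n).eval t * (legendreP n).eval t))
      volume (-1) 1 :=
    (continuous_const.mul ((((X : Polynomial ℝ) ^ n)).continuous.mul
      (legendreP n).continuous)).intervalIntegrable _ _
  rw [intervalIntegral.integral_add (contInt2 _ _) hint2,
    intervalIntegral.integral_const_mul, intXnLn]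
  have hqz : ∀ k, n ≤ k → q.coeff k = 0 := by
    intro k hk
    by_cases hkn : k = n
    · subst hkn
      simp [hq, coeff_X_pow]
    · simp [hq, coeff_X_pow, Ne.symm hkn, h k (by omega)]
      exact fun h' => absurd h' hkn
  rw [orth q n hqz, zero_add]

lemma coeff_F_odd (n : ℕ) : ∀ m : ℕ, m % 2 = 1 → ((X ^ 2 - 1 : Polynomial ℝ) ^ n).coeff m = 0 := by
  induction n with
  | zero =>
    intro m hm
    rw [pow_zero, coeff_one, if_neg (by omega)]
  | succ n ih =>
    intro m hm
    have hrw : ((X ^ 2 - 1 : Polynomial ℝ) ^ (n + 1)) = ((X ^ 2 - 1) ^ n) * X ^ 2 - (X ^ 2 - 1) ^ n := by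
      ring
    rw [hrw, coeff_sub, coeff_mul_X_pow', ih m hm]
    split_ifs with h
    · rw [ih (m - 2) (by omega)]; ring
    · ring

lemma coeff_L_parity (n k : ℕ) (h : (k + n) % 2 = 1) : (legendreP n).coeff k = 0 := by
  rw [legendreP, coeff_smul, coeff_iterate_derivative, coeff_F_odd n (k + n) h]
  simp

lemma natDegree_F (n : ℕ) : ((X ^ 2 - 1 : Polynomial ℝ) ^ n).natDegree = 2 * n := by
  rw [natDegree_pow]
  have h2 : ((X : Polynomial ℝ) ^ 2 - 1).natDegree = 2 := by
    have := natDegree_X_pow_sub_C (n := 2) (r := (1:ℝ))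
    simpa using this
  rw [h2, Nat.mul_comm]

lemma natDegree_L_le (n : ℕ) : (legendreP n).natDegree ≤ n := by
  refine (natDegree_smul_le _ _).trans ?_
  refine (natDegree_iterate_derivative _ _).trans ?_
  rw [natDegree_F]
  omega

lemma monic_F (n : ℕ) : ((X ^ 2 - 1 : Polynomial ℝ) ^ n).Monic := by
  have : ((X : Polynomial ℝ) ^ 2 - 1).Monic := by
    have := monic_X_pow_sub_C (1 : ℝ) (n := 2) two_ne_zero
    simpa using this
  exact this.pow n

lemma coeff_L_top (n : ℕ) :
    (legendreP n).coeff n = ((2 * n).descFactorial n : ℝ) / (2 ^ n * n.factorial) := by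
  rw [legendreP, coeff_smul, coeff_iterate_derivative]
  have h1 : ((X ^ 2 - 1 : Polynomial ℝ) ^ n).coeff (n + n) = 1 := by
    have := (monic_F n).coeff_natDegree
    rw [natDegree_F] at this
    rw [show n + n = 2 * n by omega, this]
  rw [h1, show n + n = 2 * n by omega]
  simp [smul_eq_mul, div_eq_inv_mul]

lemma S_lt (m n : ℕ) (h : m < n) :
    ∫ t in (-1:ℝ)..1, (legendreP m).eval t * (legendreP n).eval t = 0 := by
  refine orth _ _ fun k hk => ?_
  exact coeff_eq_zero_of_natDegree_lt ((natDegree_L_le m).trans_lt (by omega))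

lemma S_diag (n : ℕ) :
    ∫ t in (-1:ℝ)..1, (legendreP n).eval t * (legendreP n).eval t = 2 / (2 * (n:ℝ) + 1) := by
  rw [val (legendreP n) n
    (fun k hk => coeff_eq_zero_of_natDegree_lt ((natDegree_L_le n).trans_lt hk)),
    coeff_L_top, An]
  have hd : ((2 * n).descFactorial n : ℝ) * (n.factorial : ℝ) = ((2 * n).factorial : ℝ) := by
    have := Nat.factorial_mul_descFactorial (n := 2 * n) (k := n) (by omega)
    rw [show 2 * n - n = n by omega] at this
    exact_mod_cast (by rw [← this]; ring)
  have hf : ((2 * n + 1).factorial : ℝ) = (2 * (n:ℝ) + 1) * ((2 * n).factorial : ℝ) := by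
    rw [Nat.factorial_succ]; push_cast; ring
  have h1 : (n.factorial : ℝ) ≠ 0 := by positivity
  have h2 : ((2 * n).factorial : ℝ) ≠ 0 := by positivity
  have h3 : (2 * (n:ℝ) + 1) ≠ 0 := by positivity
  rw [hf]
  field_simp
  linear_combination (2:ℝ) ^ (n + 1) * hd

lemma coeff_XL_zero (m : ℕ) {k : ℕ} (hk : m + 1 < k) : (X * legendreP m).coeff k = 0 := by
  match k with
  | 0 => omega
  | k + 1 =>
    rw [coeff_X_mul]
    exact coeff_eq_zero_of_natDegree_lt ((natDegree_L_le m).trans_lt (by omega))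

lemma T_lt (m n : ℕ) (h : m + 1 < n) :
    ∫ t in (-1:ℝ)..1, (X * legendreP m).eval t * (legendreP n).eval t = 0 := by
  refine orth _ _ fun k hk => coeff_XL_zero m (by omega)

lemma M_val (n : ℕ) :
    ∫ t in (-1:ℝ)..1, (X * legendreP n).eval t * (legendreP (n + 1)).eval t
      = 2 * ((n:ℝ) + 1) / ((2 * (n:ℝ) + 1) * (2 * (n:ℝ) + 3)) := by
  rw [val (X * legendreP n) (n + 1) (fun k hk => coeff_XL_zero n hk), coeff_X_mul,
    coeff_L_top, An]
  have hd : ((2 * n).descFactorial n : ℝ) * (n.factorial : ℝ) = ((2 * n).factorial : ℝ) := by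
    have := Nat.factorial_mul_descFactorial (n := 2 * n) (k := n) (by omega)
    rw [show 2 * n - n = n by omega] at this
    exact_mod_cast (by rw [← this]; ring)
  have hf : ((2 * (n + 1) + 1).factorial : ℝ)
      = (2 * (n:ℝ) + 3) * ((2 * (n:ℝ) + 2) * ((2 * (n:ℝ) + 1) * ((2 * n).factorial : ℝ))) := by
    rw [show 2 * (n + 1) + 1 = ((2 * n + 1) + 1) + 1 by omega, Nat.factorial_succ,
      Nat.factorial_succ, Nat.factorial_succ]
    push_cast; ring
  have hf2 : ((n + 1).factorial : ℝ) = ((n:ℝ) + 1) * (n.factorial : ℝ) := by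
    rw [Nat.factorial_succ]; push_cast; ring
  have h1 : (n.factorial : ℝ) ≠ 0 := by positivity
  have h2 : ((2 * n).factorial : ℝ) ≠ 0 := by positivity
  have h3 : (2 * (n:ℝ) + 1) ≠ 0 := by positivity
  have h4 : (2 * (n:ℝ) + 3) ≠ 0 := by positivity
  have h5 : (2 * (n:ℝ) + 2) ≠ 0 := by positivity
  rw [hf, hf2]
  field_simp
  linear_combination (4 * (2:ℝ) ^ n) * hd

lemma iter_comp (k : ℕ) (p : Polynomial ℝ) :
    derivative^[k] (p.comp (-X)) = ((-1:ℝ) ^ k) • ((derivative^[k] p).comp (-X)) := by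
  induction k with
  | zero => simp
  | succ k ih =>
    rw [Function.iterate_succ_apply', ih, derivative_smul, derivative_comp]
    rw [show derivative^[k+1] p = derivative (derivative^[k] p) from Function.iterate_succ_apply' _ _ _]
    simp [pow_succ, smul_smul]

lemma F_comp_neg (n : ℕ) : ((X ^ 2 - 1 : Polynomial ℝ) ^ n).comp (-X) = (X ^ 2 - 1) ^ n := by
  rw [pow_comp, sub_comp, pow_comp, X_comp, one_comp, neg_sq]

lemma L_comp_neg (n : ℕ) : (legendreP n).comp (-X) = ((-1:ℝ) ^ n) • legendreP n := by
  have h1 : ((-1:ℝ) ^ n) * ((-1:ℝ) ^ n) = 1 := by rw [← mul_pow]; norm_num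
  have h := iter_comp n ((X ^ 2 - 1 : Polynomial ℝ) ^ n)
  rw [F_comp_neg] at h
  have h2 : (derivative^[n] ((X ^ 2 - 1 : Polynomial ℝ) ^ n)).comp (-X)
      = ((-1:ℝ) ^ n) • derivative^[n] ((X ^ 2 - 1 : Polynomial ℝ) ^ n) := by
    conv_rhs => rw [h]
    rw [smul_smul, h1, one_smul]
  rw [legendreP, smul_comp, h2, smul_comm]

lemma eval_L_neg (n : ℕ) (t : ℝ) :
    (legendreP n).eval (-t) = (-1:ℝ) ^ n * (legendreP n).eval t := by
  have : (legendreP n).eval (-t) = ((legendreP n).comp (-X)).eval t := by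
    rw [eval_comp]; simp
  rw [this, L_comp_neg, eval_smul, smul_eq_mul]

lemma T_diag (n : ℕ) :
    ∫ t in (-1:ℝ)..1, (X * legendreP n).eval t * (legendreP n).eval t = 0 := by
  have h1 : ((-1:ℝ) ^ n) * ((-1:ℝ) ^ n) = 1 := by rw [← mul_pow]; norm_num
  have h := intervalIntegral.integral_comp_neg (a := (-1:ℝ)) (b := 1)
    (f := fun t => (X * legendreP n).eval t * (legendreP n).eval t)
  have hpt : ∀ x : ℝ, (X * legendreP n).eval (-x) * (legendreP n).eval (-x)
      = -((X * legendreP n).eval x * (legendreP n).eval x) := by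
    intro x
    simp only [eval_mul, eval_X, eval_L_neg]
    linear_combination (-(x * (legendreP n).eval x * (legendreP n).eval x)) * h1
  simp only [hpt] at h
  rw [intervalIntegral.integral_neg, neg_neg] at h
  linarith

lemma T_sym (m n : ℕ) :
    ∫ t in (-1:ℝ)..1, (X * legendreP m).eval t * (legendreP n).eval t
      = ∫ t in (-1:ℝ)..1, (X * legendreP n).eval t * (legendreP m).eval t := by
  apply intervalIntegral.integral_congr
  intro t _
  simp [eval_mul]
  ring

lemma S_sym (m n : ℕ) :
    ∫ t in (-1:ℝ)..1, (legendreP m).eval t * (legendreP n).eval t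
      = ∫ t in (-1:ℝ)..1, (legendreP n).eval t * (legendreP m).eval t := by
  apply intervalIntegral.integral_congr
  intro t _
  ring

noncomputable def W (m n : ℕ) : ℝ :=
  ∫ t in (-1:ℝ)..1, (t + 1) * (legendreP m).eval t * (legendreP n).eval t

lemma cont3 (m n : ℕ) : IntervalIntegrable
    (fun t => (t + 1) * (legendreP m).eval t * (legendreP n).eval t) volume (-1) 1 :=
  (((continuous_id.add continuous_const).mul (legendreP m).continuous).mul
    (legendreP n).continuous).intervalIntegrable _ _

lemma W_split (m n : ℕ) : W m n
    = (∫ t in (-1:ℝ)..1, (X * legendreP m).eval t * (legendreP n).eval t)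
      + ∫ t in (-1:ℝ)..1, (legendreP m).eval t * (legendreP n).eval t := by
  unfold W
  rw [← intervalIntegral.integral_add (contInt2 _ _) (contInt2 _ _)]
  apply intervalIntegral.integral_congr
  intro t _
  simp [eval_mul]
  ring

lemma main_split (i j : ℕ) :
    (∫ t in (-1:ℝ)..1, (t + 1) * ((legendreP i - legendreP (i+2)).eval t)
        * ((legendreP j - legendreP (j+2)).eval t))
      = W i j - W (i + 2) j - W i (j + 2) + W (i + 2) (j + 2) := by
  have h : ∀ t : ℝ, (t + 1) * ((legendreP i - legendreP (i+2)).eval t)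
        * ((legendreP j - legendreP (j+2)).eval t)
      = (((t + 1) * (legendreP i).eval t * (legendreP j).eval t
          - (t + 1) * (legendreP (i+2)).eval t * (legendreP j).eval t)
          - (t + 1) * (legendreP i).eval t * (legendreP (j+2)).eval t)
          + (t + 1) * (legendreP (i+2)).eval t * (legendreP (j+2)).eval t := by
    intro t
    simp [eval_sub]
    ring
  rw [intervalIntegral.integral_congr (fun t _ => h t)]
  rw [intervalIntegral.integral_add (((cont3 _ _).sub (cont3 _ _)).sub (cont3 _ _)) (cont3 _ _),
    intervalIntegral.integral_sub ((cont3 _ _).sub (cont3 _ _)) (cont3 _ _),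
    intervalIntegral.integral_sub (cont3 _ _) (cont3 _ _)]
  rfl

end LegAux

open LegAux

/-- For `i ≤ j`, `∫_{−1}^{1} (t+1) φ_i(t) φ_j(t) dt` equals
`2/(2i+1) + 2/(2i+5)` if `j = i`;
`2/((2i+1)(2i+5)) + 2(i+3)/((2i+5)(2i+7))` if `j = i+1`;
`−2/(2i+5)` if `j = i+2`;
`−2(i+3)/((2i+5)(2i+7))` if `j = i+3`; and `0` if `j ≥ i+4`. -/
theorem integral_mass_phi (i j : ℕ) (hij : i ≤ j) :
    (j = i →
      ∫ t in (-1:ℝ)..1, (t + 1) * (phiP i).eval t * (phiP j).eval t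
        = 2 / (2 * (i : ℝ) + 1) + 2 / (2 * (i : ℝ) + 5)) ∧
    (j = i + 1 →
      ∫ t in (-1:ℝ)..1, (t + 1) * (phiP i).eval t * (phiP j).eval t
        = 2 / ((2 * (i : ℝ) + 1) * (2 * (i : ℝ) + 5))
          + 2 * ((i : ℝ) + 3) / ((2 * (i : ℝ) + 5) * (2 * (i : ℝ) + 7))) ∧
    (j = i + 2 →
      ∫ t in (-1:ℝ)..1, (t + 1) * (phiP i).eval t * (phiP j).eval t
        = -2 / (2 * (i : ℝ) + 5)) ∧
    (j = i + 3 →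
      ∫ t in (-1:ℝ)..1, (t + 1) * (phiP i).eval t * (phiP j).eval t
        = -(2 * ((i : ℝ) + 3)) / ((2 * (i : ℝ) + 5) * (2 * (i : ℝ) + 7))) ∧
    (i + 4 ≤ j →
      ∫ t in (-1:ℝ)..1, (t + 1) * (phiP i).eval t * (phiP j).eval t = 0) := by

  have key : ∀ a b : ℕ, (∫ t in (-1:ℝ)..1, (t + 1) * (phiP a).eval t * (phiP b).eval t)
      = W a b - W (a + 2) b - W a (b + 2) + W (a + 2) (b + 2) := by
    intro a b
    simp only [phiP]
    exact main_split a b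
  have h1 : (2 * (i : ℝ) + 1) ≠ 0 := by positivity
  have h3 : (2 * (i : ℝ) + 3) ≠ 0 := by positivity
  have h5 : (2 * (i : ℝ) + 5) ≠ 0 := by positivity
  have h7 : (2 * (i : ℝ) + 7) ≠ 0 := by positivity
  refine ⟨?_, ?_, ?_, ?_, ?_⟩
  · intro h; subst h
    rw [key, W_split j j, W_split (j + 2) j, W_split j (j + 2), W_split (j + 2) (j + 2),
      T_diag j, S_diag j, T_sym (j + 2) j, T_lt j (j + 2) (by omega),
      S_sym (j + 2) j, S_lt j (j + 2) (by omega), T_diag (j + 2), S_diag (j + 2)]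
    push_cast
    field_simp
    ring
  · intro h; subst h
    rw [key, W_split i (i + 1), W_split (i + 2) (i + 1), W_split i (i + 1 + 2),
      W_split (i + 2) (i + 1 + 2),
      M_val i, S_lt i (i + 1) (by omega),
      T_sym (i + 2) (i + 1), M_val (i + 1), S_sym (i + 2) (i + 1),
      S_lt (i + 1) (i + 2) (by omega),
      T_lt i (i + 1 + 2) (by omega), S_lt i (i + 1 + 2) (by omega),
      show i + 1 + 2 = (i + 2) + 1 by omega, M_val (i + 2), S_lt (i + 2) (i + 2 + 1) (by omega)]
    push_cast
    field_simp
    ring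
  · intro h; subst h
    rw [key, W_split i (i + 2), W_split (i + 2) (i + 2), W_split i (i + 2 + 2),
      W_split (i + 2) (i + 2 + 2),
      T_lt i (i + 2) (by omega), S_lt i (i + 2) (by omega),
      T_diag (i + 2), S_diag (i + 2),
      T_lt i (i + 2 + 2) (by omega), S_lt i (i + 2 + 2) (by omega),
      T_lt (i + 2) (i + 2 + 2) (by omega), S_lt (i + 2) (i + 2 + 2) (by omega)]
    push_cast
    field_simp
    ring
  · intro h; subst h
    rw [key, W_split i (i + 3), W_split (i + 2) (i + 3), W_split i (i + 3 + 2),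
      W_split (i + 2) (i + 3 + 2),
      T_lt i (i + 3) (by omega), S_lt i (i + 3) (by omega),
      show i + 3 = (i + 2) + 1 by omega, M_val (i + 2), S_lt (i + 2) (i + 2 + 1) (by omega),
      T_lt i (i + 2 + 1 + 2) (by omega), S_lt i (i + 2 + 1 + 2) (by omega),
      T_lt (i + 2) (i + 2 + 1 + 2) (by omega), S_lt (i + 2) (i + 2 + 1 + 2) (by omega)]
    push_cast
    field_simp
    ring
  · intro h
    rw [key, W_split i j, W_split (i + 2) j, W_split i (j + 2), W_split (i + 2) (j + 2),
      T_lt i j (by omega), S_lt i j (by omega),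
      T_lt (i + 2) j (by omega), S_lt (i + 2) j (by omega),
      T_lt i (j + 2) (by omega), S_lt i (j + 2) (by omega),
      T_lt (i + 2) (j + 2) (by omega), S_lt (i + 2) (j + 2) (by omega)]
    norm_num
end
end

section
/- For all natural numbers i and j, the integral ∫_{−1}^{1} (t + 1) ψ_i′(t) ψ_j′(t) dt equals 2i + 2 if j = i, and 0 if j ≠ i. (Here ψ_l′ denotes the polynomial derivative of ψ_l.) -/
open Polynomial MeasureTheory

noncomputable section

/-- `ψ_l(t) = L_l(t) − L_{l+1}(t)`. -/
noncomputable def psiP (l : ℕ) : Polynomial ℝ := legendreP l - legendreP (l + 1)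

namespace StiffnessAux

/-- `(X²−1)^n`. -/
noncomputable def fP (n : ℕ) : Polynomial ℝ := ((X : Polynomial ℝ) ^ 2 - 1) ^ n

lemma legendreP_eq (n : ℕ) :
    legendreP n = ((2 ^ n * n.factorial : ℝ))⁻¹ • (derivative^[n] (fP n)) := rfl

/-- Iterated derivative of `X * p`. -/
lemma iter_deriv_X_mul (m : ℕ) (p : Polynomial ℝ) :
    derivative^[m + 1] (X * p) =
      X * derivative^[m + 1] p + C ((m : ℝ) + 1) * derivative^[m] p := by
  induction m generalizing p with
  | zero => simp [derivative_mul]; ring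
  | succ k ih =>
    rw [Function.iterate_succ_apply' derivative (k + 1) (X * p), ih,
      Function.iterate_succ_apply' derivative (k + 1) p]
    simp only [derivative_add, derivative_mul, derivative_X, derivative_C, one_mul, zero_mul,
      zero_add, Function.iterate_succ_apply' derivative k p]
    simp only [map_add, map_mul, map_one, map_ofNat, map_natCast, Polynomial.C_1]
    push_cast
    ring

/-- ℕ-subtraction variant. -/
lemma iter_deriv_X_mul' (m : ℕ) (p : Polynomial ℝ) :
    derivative^[m] (X * p) =
      X * derivative^[m] p + C ((m : ℝ)) * derivative^[m - 1] p := by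
  cases m with
  | zero => simp
  | succ k => simpa using iter_deriv_X_mul k p

/-- Iterated derivative of `(X²−1) * g`, second order Leibniz. -/
lemma iter_deriv_sq_mul (m : ℕ) (g : Polynomial ℝ) :
    derivative^[m + 2] (((X : Polynomial ℝ) ^ 2 - 1) * g) =
      ((X : Polynomial ℝ) ^ 2 - 1) * derivative^[m + 2] g
        + C (2 * ((m : ℝ) + 2)) * (X * derivative^[m + 1] g)
        + C (((m : ℝ) + 1) * ((m : ℝ) + 2)) * derivative^[m] g := by
  induction m generalizing g with
  | zero =>
    simp only [zero_add, Nat.cast_zero, Function.iterate_succ_apply', Function.iterate_zero_apply,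
      Function.iterate_one, derivative_mul, derivative_sub, derivative_one, derivative_X_pow,
      derivative_add, derivative_X, derivative_C, derivative_zero, zero_mul, sub_zero]
    simp only [map_add, map_mul, map_one, map_ofNat, map_natCast, Polynomial.C_1]
    push_cast
    ring
  | succ k ih =>
    rw [Function.iterate_succ_apply' derivative (k + 2) _, ih,
      Function.iterate_succ_apply' derivative (k + 2) g]
    simp only [derivative_add, derivative_mul, derivative_sub, derivative_one, derivative_X_pow,
      derivative_X, derivative_C, Function.iterate_succ_apply' derivative (k + 1) g,
      ← Function.iterate_succ_apply' derivative k g]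
    simp only [map_add, map_mul, map_one, map_ofNat, map_natCast, Polynomial.C_1]
    push_cast
    ring

lemma deriv_fP (n : ℕ) :
    derivative (fP (n + 1)) = C (2 * ((n : ℝ) + 1)) * (X * fP n) := by
  unfold fP
  rw [derivative_pow]
  simp only [derivative_sub, derivative_one, derivative_X_pow, sub_zero, Nat.cast_ofNat,
    Nat.add_sub_cancel, Nat.cast_add, Nat.cast_one, pow_one]
  simp only [map_add, map_mul, map_one, map_ofNat, map_natCast, Polynomial.C_1]
  ring

/-- The key "ODE-type" identity `(X²−1) D^[n+1] f_n = n(n+1) D^[n−1] f_n`. -/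
lemma keyK (n : ℕ) :
    ((X : Polynomial ℝ) ^ 2 - 1) * derivative^[n + 1] (fP n)
      = C ((n : ℝ) * ((n : ℝ) + 1)) * derivative^[n - 1] (fP n) := by
  match n with
  | 0 => simp [fP]
  | 1 =>
    show _ * derivative (derivative (fP 1)) = _
    simp only [fP, pow_one, derivative_sub, derivative_one, derivative_X_pow, sub_zero,
      Nat.cast_ofNat, Nat.cast_one, pow_one, Function.iterate_zero_apply, derivative_mul,
      derivative_C, derivative_X, zero_mul, mul_one, zero_add]
    simp only [map_add, map_mul, map_one, map_ofNat, map_natCast, Polynomial.C_1]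
    norm_num
    ring
  | (k + 2) =>
    have hR : ((X : Polynomial ℝ) ^ 2 - 1) * derivative (fP (k + 2))
        = C (2 * ((k : ℝ) + 2)) * (X * fP (k + 2)) := by
      rw [show k + 2 = (k + 1) + 1 from rfl, deriv_fP (k + 1)]
      have : fP (k + 2) = ((X : Polynomial ℝ) ^ 2 - 1) * fP (k + 1) := by
        unfold fP; ring
      rw [this]
      push_cast
      ring
    have h2 := congrArg (fun q => derivative^[k + 2] q) hR
    rw [iter_deriv_sq_mul k (derivative (fP (k + 2))), iterate_derivative_C_mul,
      iter_deriv_X_mul (k + 1) (fP (k + 2))] at h2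
    simp only [← Function.iterate_succ_apply derivative k,
      ← Function.iterate_succ_apply derivative (k + 1),
      ← Function.iterate_succ_apply derivative (k + 2)] at h2
    simp only [map_add, map_mul, map_one, map_ofNat, map_natCast, Polynomial.C_1] at h2 ⊢
    push_cast at h2 ⊢
    linear_combination h2

/-- `D h_{n+1} = 2(n+1) X D h_n + 2(n+1)² h_n` (I1). -/
lemma identI1 (n : ℕ) :
    derivative^[n + 2] (fP (n + 1)) =
      C (2 * ((n : ℝ) + 1)) * (X * derivative^[n + 1] (fP n))
        + C (2 * ((n : ℝ) + 1) * ((n : ℝ) + 1)) * derivative^[n] (fP n) := by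
  rw [Function.iterate_succ_apply derivative (n + 1) (fP (n + 1)), deriv_fP n,
    iterate_derivative_C_mul, iter_deriv_X_mul n (fP n)]
  simp only [map_add, map_mul, map_one, map_ofNat, map_natCast, Polynomial.C_1]
  push_cast
  ring

/-- `X D h_{n+1} = 2(n+1) D h_n + (n+1) h_{n+1}` (I2). -/
lemma identI2 (n : ℕ) :
    X * derivative^[n + 2] (fP (n + 1)) =
      C (2 * ((n : ℝ) + 1)) * derivative^[n + 1] (fP n)
        + C ((n : ℝ) + 1) * derivative^[n + 1] (fP (n + 1)) := by
  have hA := identI1 n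
  have hK := keyK n
  have hB : derivative^[n + 1] (fP (n + 1))
      = C (2 * ((n : ℝ) + 1)) * (X * derivative^[n] (fP n)
          + C ((n : ℝ)) * derivative^[n - 1] (fP n)) := by
    rw [Function.iterate_succ_apply derivative n (fP (n + 1)), deriv_fP n,
      iterate_derivative_C_mul, iter_deriv_X_mul' n (fP n)]
  simp only [map_add, map_mul, map_one, map_ofNat, map_natCast, Polynomial.C_1] at hA hK hB ⊢
  push_cast at hA hK hB ⊢
  linear_combination X * hA + (2 * ((n : Polynomial ℝ) + 1)) * hK
    - ((n : Polynomial ℝ) + 1) * hB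

/-- `(1+X) ψ_n' = −(n+1)(L_n + L_{n+1})`. -/
lemma identPsi (n : ℕ) :
    (1 + X) * derivative (psiP n) =
      C (-((n : ℝ) + 1)) * (legendreP n + legendreP (n + 1)) := by
  have hA := identI1 n
  have hI2 := identI2 n
  have hc : ((2 ^ n * n.factorial : ℝ))⁻¹
      = 2 * ((n : ℝ) + 1) * ((2 ^ (n + 1) * (n + 1).factorial : ℝ))⁻¹ := by
    rw [Nat.factorial_succ, pow_succ]
    push_cast
    have h1 : (2 : ℝ) ^ n ≠ 0 := by positivity
    have h2 : (n.factorial : ℝ) ≠ 0 := by positivity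
    field_simp
  unfold psiP
  rw [legendreP_eq n, legendreP_eq (n + 1)]
  simp only [smul_eq_C_mul, derivative_sub, derivative_C_mul]
  rw [← Function.iterate_succ_apply' derivative n (fP n),
    ← Function.iterate_succ_apply' derivative (n + 1) (fP (n + 1))]
  have hg := congrArg C hc
  simp only [map_add, map_mul, map_one, map_neg, map_ofNat, map_natCast,
    Polynomial.C_1] at hA hI2 hg ⊢
  push_cast at hA hI2 hg ⊢
  linear_combination (- C (((2:ℝ) ^ (n+1) * ((n+1).factorial : ℝ))⁻¹)) * hA
    - (C (((2:ℝ) ^ (n+1) * ((n+1).factorial : ℝ))⁻¹)) * hI2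
    + ((1 + X) * derivative^[n + 1] (fP n)
        + ((n : Polynomial ℝ) + 1) * derivative^[n] (fP n)) * hg

/-- Structure of iterated derivatives of `(X²−1)^n`: divisibility and boundary values. -/
lemma struct (n k : ℕ) (hk : k ≤ n) :
    ∃ g : Polynomial ℝ, derivative^[k] (fP n) = ((X : Polynomial ℝ) ^ 2 - 1) ^ (n - k) * g
      ∧ g.eval 1 = 2 ^ k * (n.descFactorial k : ℝ)
      ∧ g.eval (-1) = (-1) ^ k * 2 ^ k * (n.descFactorial k : ℝ) := by
  induction k with
  | zero =>
    exact ⟨1, by simp [fP], by simp, by simp⟩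
  | succ k ih =>
    obtain ⟨g, hg, h1, h2⟩ := ih (le_of_lt hk)
    refine ⟨C (2 * ((n : ℝ) - (k : ℝ))) * (X * g) + ((X : Polynomial ℝ) ^ 2 - 1) * derivative g,
      ?_, ?_, ?_⟩
    · rw [Function.iterate_succ_apply' derivative k (fP n), hg]
      have hnk : n - k = (n - (k + 1)) + 1 := by omega
      rw [hnk]
      simp only [derivative_mul, derivative_pow, derivative_sub, derivative_one, derivative_X_pow,
        sub_zero, derivative_X, mul_one, pow_one]
      simp only [map_add, map_mul, map_sub, map_one, map_ofNat, map_natCast, Polynomial.C_1]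
      have hc : ((n - (k + 1) + 1 : ℕ) : Polynomial ℝ) = (n : Polynomial ℝ) - (k : Polynomial ℝ) := by
        rw [show n - (k + 1) + 1 = n - k from by omega, Nat.cast_sub (by omega : k ≤ n)]
      rw [Nat.add_sub_cancel]
      push_cast [hc]
      ring
    · have hd : (n.descFactorial (k + 1) : ℝ) = ((n : ℝ) - (k : ℝ)) * (n.descFactorial k : ℝ) := by
        rw [Nat.descFactorial_succ]
        have hcast : ((n - k : ℕ) : ℝ) = (n : ℝ) - (k : ℝ) := by
          have : (k : ℝ) ≤ (n : ℝ) := by exact_mod_cast le_of_lt hk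
          push_cast [Nat.cast_sub (le_of_lt hk)]
          ring
        push_cast
        rw [hcast]
      simp [h1, hd, Nat.cast_sub (show k ≤ n by omega)]
      ring
    · have hd : (n.descFactorial (k + 1) : ℝ) = ((n : ℝ) - (k : ℝ)) * (n.descFactorial k : ℝ) := by
        rw [Nat.descFactorial_succ]
        have hcast : ((n - k : ℕ) : ℝ) = (n : ℝ) - (k : ℝ) := by
          push_cast [Nat.cast_sub (le_of_lt hk)]
          ring
        push_cast
        rw [hcast]
      simp [h2, hd, Nat.cast_sub (show k ≤ n by omega)]
      ring

lemma boundary_eval_one (n k : ℕ) (hk : k < n) :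
    (derivative^[k] (fP n)).eval 1 = 0 := by
  obtain ⟨g, hg, -, -⟩ := struct n k (le_of_lt hk)
  rw [hg]
  have : n - k ≠ 0 := by omega
  simp [this, zero_pow]

lemma boundary_eval_negone (n k : ℕ) (hk : k < n) :
    (derivative^[k] (fP n)).eval (-1) = 0 := by
  obtain ⟨g, hg, -, -⟩ := struct n k (le_of_lt hk)
  rw [hg]
  have : n - k ≠ 0 := by omega
  simp [this, zero_pow]

lemma legendre_eval_one (n : ℕ) : (legendreP n).eval 1 = 1 := by
  obtain ⟨g, hg, h1, -⟩ := struct n n le_rfl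
  rw [legendreP_eq, eval_smul, hg]
  simp only [eval_mul, eval_pow, eval_sub, eval_one, eval_X, Nat.sub_self, pow_zero, one_mul,
    smul_eq_mul, h1, Nat.descFactorial_self, one_pow]
  have h2 : ((2:ℝ) ^ n * (n.factorial : ℝ)) ≠ 0 := by positivity
  field_simp

lemma legendre_eval_negone (n : ℕ) : (legendreP n).eval (-1) = (-1) ^ n := by
  obtain ⟨g, hg, -, h2⟩ := struct n n le_rfl
  rw [legendreP_eq, eval_smul, hg]
  simp only [eval_mul, eval_pow, eval_sub, eval_one, eval_X, Nat.sub_self, pow_zero, one_mul,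
    smul_eq_mul, h2, Nat.descFactorial_self]
  have h3 : ((2:ℝ) ^ n * (n.factorial : ℝ)) ≠ 0 := by positivity
  field_simp

lemma psi_eval_one (l : ℕ) : (psiP l).eval 1 = 0 := by
  simp [psiP, legendre_eval_one]

lemma psi_eval_negone (l : ℕ) : (psiP l).eval (-1) = 2 * (-1) ^ l := by
  simp [psiP, legendre_eval_negone, pow_succ]
  ring

/-- FTC for polynomials on `[-1, 1]`. -/
lemma integ_deriv (p : Polynomial ℝ) :
    ∫ t in (-1:ℝ)..1, (derivative p).eval t = p.eval 1 - p.eval (-1) := by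
  refine intervalIntegral.integral_deriv_eq_sub' (fun t => eval t p) ?_ ?_ ?_
  · funext t
    exact p.deriv
  · intro x _
    exact (p.hasDerivAt x).differentiableAt
  · exact ((derivative p).continuous).continuousOn

/-- Integration by parts for polynomials on `[-1, 1]`. -/
lemma ibp (p q : Polynomial ℝ) :
    ∫ t in (-1:ℝ)..1, (derivative p).eval t * q.eval t =
      p.eval 1 * q.eval 1 - p.eval (-1) * q.eval (-1)
        - ∫ t in (-1:ℝ)..1, p.eval t * (derivative q).eval t := by
  have h := integ_deriv (p * q)
  rw [derivative_mul] at h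
  have hsplit : ∫ t in (-1:ℝ)..1, (derivative p * q + p * derivative q).eval t
      = (∫ t in (-1:ℝ)..1, (derivative p).eval t * q.eval t)
        + ∫ t in (-1:ℝ)..1, p.eval t * (derivative q).eval t := by
    rw [← intervalIntegral.integral_add]
    · congr 1
      funext t
      simp [eval_add, eval_mul]
    · exact (((derivative p).continuous).mul (q.continuous)).intervalIntegrable _ _
    · exact ((p.continuous).mul ((derivative q).continuous)).intervalIntegrable _ _
  rw [hsplit] at h
  simp only [eval_mul] at h
  linarith

/-- Iterated integration by parts against `(X²−1)^n`. -/
lemma ibp_iter (n : ℕ) (j : ℕ) (hj : j ≤ n) (q : Polynomial ℝ) :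
    ∫ t in (-1:ℝ)..1, (derivative^[n] (fP n)).eval t * q.eval t =
      (-1) ^ j * ∫ t in (-1:ℝ)..1,
        (derivative^[n - j] (fP n)).eval t * (derivative^[j] q).eval t := by
  induction j with
  | zero => simp
  | succ j ih =>
    rw [ih (by omega)]
    have e : n - j = (n - (j + 1)) + 1 := by omega
    rw [e, Function.iterate_succ_apply' derivative (n - (j + 1)) (fP n)]
    rw [ibp (derivative^[n - (j + 1)] (fP n)) (derivative^[j] q)]
    rw [boundary_eval_one n (n - (j + 1)) (by omega), boundary_eval_negone n (n - (j + 1)) (by omega)]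
    rw [Function.iterate_succ_apply' derivative j q]
    ring

/-- Orthogonality of `legendreP n` to polynomials of degree `< n`. -/
lemma orth (n : ℕ) (p : Polynomial ℝ) (hp : p.natDegree < n) :
    ∫ t in (-1:ℝ)..1, (legendreP n).eval t * p.eval t = 0 := by
  have h := ibp_iter n n le_rfl p
  rw [Polynomial.iterate_derivative_eq_zero hp] at h
  simp only [Nat.sub_self, Function.iterate_zero_apply, eval_zero, mul_zero,
    intervalIntegral.integral_zero, mul_zero] at h
  have : ∀ t : ℝ, (legendreP n).eval t
      = ((2 ^ n * n.factorial : ℝ))⁻¹ * (derivative^[n] (fP n)).eval t := by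
    intro t
    rw [legendreP_eq, eval_smul, smul_eq_mul]
  calc ∫ t in (-1:ℝ)..1, (legendreP n).eval t * p.eval t
      = ∫ t in (-1:ℝ)..1, ((2 ^ n * n.factorial : ℝ))⁻¹
          * ((derivative^[n] (fP n)).eval t * p.eval t) := by
        congr 1; funext t; rw [this t]; ring
    _ = ((2 ^ n * n.factorial : ℝ))⁻¹
          * ∫ t in (-1:ℝ)..1, (derivative^[n] (fP n)).eval t * p.eval t := by
        rw [intervalIntegral.integral_const_mul]
    _ = 0 := by rw [h]; ring

lemma natDegree_legendre_le (n : ℕ) : (legendreP n).natDegree ≤ n := by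
  rw [legendreP_eq]
  refine le_trans (natDegree_smul_le _ _) ?_
  refine le_trans (natDegree_iterate_derivative _ _) ?_
  have h1 : (fP n).natDegree ≤ 2 * n := by
    unfold fP
    refine le_trans (natDegree_pow_le) ?_
    have h2 : ((X : Polynomial ℝ) ^ 2 - 1).natDegree ≤ 2 := by
      refine le_trans (natDegree_sub_le _ _) ?_
      simp [natDegree_X_pow]
    calc n * ((X : Polynomial ℝ) ^ 2 - 1).natDegree ≤ n * 2 := Nat.mul_le_mul_left n h2
      _ = 2 * n := by ring
  omega

lemma natDegree_Dpsi_le (l : ℕ) : (derivative (psiP l)).natDegree ≤ l := by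
  have h1 : (psiP l).natDegree ≤ l + 1 := by
    unfold psiP
    refine le_trans (natDegree_sub_le _ _) ?_
    have := natDegree_legendre_le l
    have := natDegree_legendre_le (l + 1)
    omega
  have := natDegree_derivative_le (psiP l)
  omega

/-- `∫ L_n · L_k' = 0` for `k ≤ n`. -/
lemma orthD (k n : ℕ) (hk : k ≤ n) :
    ∫ t in (-1:ℝ)..1, (legendreP n).eval t * (derivative (legendreP k)).eval t = 0 := by
  cases k with
  | zero =>
    have : legendreP 0 = 1 := by
      rw [legendreP_eq]
      simp [fP]
    rw [this]
    simp
  | succ s =>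
    apply orth
    have h1 : (legendreP (s + 1)).natDegree ≤ s + 1 := natDegree_legendre_le (s + 1)
    have h2 := natDegree_derivative_le (legendreP (s + 1))
    omega

/-- `∫ L_n · ψ_m' = 0` for `m < n`. -/
lemma orthpsiD (n m : ℕ) (h : m < n) :
    ∫ t in (-1:ℝ)..1, (legendreP n).eval t * (derivative (psiP m)).eval t = 0 := by
  apply orth
  have := natDegree_Dpsi_le m
  omega

/-- `∫ L_k · ψ_m' = −2·(−1)^(k+m)` for `k ≤ m`. -/
lemma int_L_Dpsi (k m : ℕ) (hk : k ≤ m) :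
    ∫ t in (-1:ℝ)..1, (legendreP k).eval t * (derivative (psiP m)).eval t
      = -2 * (-1) ^ (k + m) := by
  have hibp := ibp (psiP m) (legendreP k)
  have hcomm : (∫ t in (-1:ℝ)..1, (derivative (psiP m)).eval t * (legendreP k).eval t)
      = ∫ t in (-1:ℝ)..1, (legendreP k).eval t * (derivative (psiP m)).eval t := by
    congr 1; funext t; ring
  rw [hcomm] at hibp
  have hsub : (∫ t in (-1:ℝ)..1, (psiP m).eval t * (derivative (legendreP k)).eval t) = 0 := by
    have : ∀ t : ℝ, (psiP m).eval t * (derivative (legendreP k)).eval t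
        = (legendreP m).eval t * (derivative (legendreP k)).eval t
          - (legendreP (m+1)).eval t * (derivative (legendreP k)).eval t := by
      intro t
      simp [psiP]
      ring
    rw [intervalIntegral.integral_congr (fun t _ => this t)]
    rw [intervalIntegral.integral_sub]
    · rw [orthD k m hk, orthD k (m + 1) (by omega)]
      ring
    · exact (((legendreP m).continuous).mul ((derivative (legendreP k)).continuous)).intervalIntegrable _ _
    · exact (((legendreP (m+1)).continuous).mul ((derivative (legendreP k)).continuous)).intervalIntegrable _ _
  rw [hsub, psi_eval_one, psi_eval_negone, legendre_eval_negone] at hibp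
  rw [hibp]
  rw [pow_add]
  ring

/-- Main computation, assuming `i ≤ j`. -/
lemma B_le (i j : ℕ) (hij : i ≤ j) :
    ∫ t in (-1:ℝ)..1, (t + 1) * (derivative (psiP i)).eval t * (derivative (psiP j)).eval t
      = if j = i then 2 * (i : ℝ) + 2 else 0 := by
  have hrw : ∀ t : ℝ, (t + 1) * (derivative (psiP i)).eval t * (derivative (psiP j)).eval t
      = (-(i : ℝ) - 1) * ((legendreP i).eval t * (derivative (psiP j)).eval t
          + (legendreP (i + 1)).eval t * (derivative (psiP j)).eval t) := by
    intro t
    have h := congrArg (fun p => eval t p) (identPsi i)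
    simp only [eval_mul, eval_add, eval_one, eval_X, eval_C] at h
    linear_combination (eval t (derivative (psiP j))) * h
  rw [intervalIntegral.integral_congr (fun t _ => hrw t)]
  rw [intervalIntegral.integral_const_mul]
  rw [intervalIntegral.integral_add
    (f := fun t => (legendreP i).eval t * (derivative (psiP j)).eval t)
    (g := fun t => (legendreP (i+1)).eval t * (derivative (psiP j)).eval t)
    ((((legendreP i).continuous).mul ((derivative (psiP j)).continuous)).intervalIntegrable _ _)
    ((((legendreP (i+1)).continuous).mul ((derivative (psiP j)).continuous)).intervalIntegrable _ _)]
  by_cases hji : j = i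
  · subst hji
    rw [if_pos rfl]
    rw [int_L_Dpsi j j le_rfl, orthpsiD (j + 1) j (by omega)]
    have : ((-1 : ℝ)) ^ (j + j) = 1 := by
      rw [← two_mul, pow_mul]
      norm_num
    rw [this]
    ring
  · rw [if_neg hji]
    have hlt : i < j := by omega
    rw [int_L_Dpsi i j (by omega), int_L_Dpsi (i + 1) j (by omega)]
    rw [show i + 1 + j = (i + j) + 1 from by omega, pow_succ]
    ring

end StiffnessAux

/-- For all `i, j`, `∫_{−1}^{1} (t+1) ψ_i′(t) ψ_j′(t) dt` equals `2i+2` if `j = i`,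
and `0` if `j ≠ i`. -/
theorem integral_stiffness_psi (i j : ℕ) :
    (j = i →
      ∫ t in (-1:ℝ)..1, (t + 1) * (Polynomial.derivative (psiP i)).eval t *
        (Polynomial.derivative (psiP j)).eval t = 2 * (i : ℝ) + 2) ∧
    (j ≠ i →
      ∫ t in (-1:ℝ)..1, (t + 1) * (Polynomial.derivative (psiP i)).eval t *
        (Polynomial.derivative (psiP j)).eval t = 0) := by
  constructor
  · intro h
    subst h
    have := StiffnessAux.B_le j j le_rfl
    rwa [if_pos rfl] at this
  · intro h
    rcases le_or_gt i j with hij | hij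
    · have := StiffnessAux.B_le i j hij
      rwa [if_neg h] at this
    · have hsym : (∫ t in (-1:ℝ)..1, (t + 1) * (derivative (psiP i)).eval t *
          (derivative (psiP j)).eval t)
        = ∫ t in (-1:ℝ)..1, (t + 1) * (derivative (psiP j)).eval t *
            (derivative (psiP i)).eval t := by
        congr 1
        funext t
        ring
      rw [hsym]
      have := StiffnessAux.B_le j i (le_of_lt hij)
      rwa [if_neg (fun hh => h hh.symm)] at this
end
end
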